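/- The rule RA□ preserves validity over Nelsonian conditional models: if the strong equivalence φ ⇔ ψ is valid in all Nelsonian conditional models, then so is (φ □→ χ) ⇔ (ψ □→ χ), for any formula χ. (Key step: validity of φ ⇔ ψ implies ‖φ‖_M = ‖ψ‖_M, i.e., both verification sets and falsification sets of φ and ψ coincide, in every model M.) -/

import Mathlib

inductive CForm : Type where
  | var : Nat → CForm
  | and : CForm → CForm → CForm
  | or  : CForm → CForm → CForm
  | neg : CForm → CForm
  | imp : CForm → CForm → CForm
  | cond : CForm → CForm → CForm

/-- A Nelsonian conditional model: a Nelsonian model together with a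
bi-set-indexed accessibility relation satisfying (c1) and (c2). -/
structure CNModel where
  W : Type
  le : W → W → Prop
  refl : ∀ w, le w w
  trans : ∀ {a b c}, le a b → le b c → le a c
  Vp : Nat → W → Prop
  Vn : Nat → W → Prop
  monoP : ∀ (n : Nat) {w v}, le w v → Vp n w → Vp n v
  monoN : ∀ (n : Nat) {w v}, le w v → Vn n w → Vn n v
  R : W → Set W × Set W → W → Prop
  c1 : ∀ (XY : Set W × Set W) {w w' v}, le w w' → R w XY v → ∃ v', R w' XY v' ∧ le v v'
  c2 : ∀ (XY : Set W × Set W) {w v v'}, R w XY v → le v v' → ∃ w', le w w' ∧ R w' XY v'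

/-- Verification (`true`) and falsification (`false`) in a Nelsonian conditional model. -/
def CNModel.sat (M : CNModel) : CForm → Bool → M.W → Prop
  | .var n, true, w => M.Vp n w
  | .var n, false, w => M.Vn n w
  | .and φ ψ, true, w => M.sat φ true w ∧ M.sat ψ true w
  | .and φ ψ, false, w => M.sat φ false w ∨ M.sat ψ false w
  | .or φ ψ, true, w => M.sat φ true w ∨ M.sat ψ true w
  | .or φ ψ, false, w => M.sat φ false w ∧ M.sat ψ false w
  | .neg φ, b, w => M.sat φ (!b) w
  | .imp φ ψ, true, w => ∀ v, M.le w v → M.sat φ true v → M.sat ψ true v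
  | .imp φ ψ, false, w => M.sat φ true w ∧ M.sat ψ false w
  | .cond φ ψ, true, w =>
      ∀ v u, M.le w v → M.R v ({x | M.sat φ true x}, {x | M.sat φ false x}) u →
        M.sat ψ true u
  | .cond φ ψ, false, w =>
      ∃ u, M.R w ({x | M.sat φ true x}, {x | M.sat φ false x}) u ∧ M.sat ψ false u

/-- N4CK-validity: verified at every world of every Nelsonian conditional model. -/
def CValid (φ : CForm) : Prop := ∀ (M : CNModel) (w : M.W), M.sat φ true w

/-- Strong implication for the conditional language. -/
def strImp (φ ψ : CForm) : CForm := .and (.imp φ ψ) (.imp (.neg ψ) (.neg φ))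

/-- Strong equivalence for the conditional language. -/
def strEquiv (φ ψ : CForm) : CForm := .and (strImp φ ψ) (strImp ψ φ)

namespace CNModel

/-- The bi-set `‖φ‖_M` of verification and falsification worlds of `φ`. -/
def biset (M : CNModel) (φ : CForm) : Set M.W × Set M.W :=
  ({x | M.sat φ true x}, {x | M.sat φ false x})

theorem sat_strEquiv_iff (M : CNModel) (φ ψ : CForm) (w : M.W) :
    M.sat (strEquiv φ ψ) true w ↔
      ∀ v, M.le w v → ∀ b, (M.sat φ b v ↔ M.sat ψ b v) := by
  simp only [strEquiv, strImp, sat, Bool.not_true]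
  constructor
  · rintro ⟨⟨hφψ, hψφ'⟩, hψφ, hφψ'⟩ v hv (_ | _)
    exacts [⟨hφψ' v hv, hψφ' v hv⟩, ⟨hφψ v hv, hψφ v hv⟩]
  · intro h
    exact ⟨⟨fun v hv => (h v hv true).1, fun v hv => (h v hv false).2⟩,
      fun v hv => (h v hv true).2, fun v hv => (h v hv false).1⟩

theorem sat_cond_congr_left (M : CNModel) {φ ψ : CForm} (h : M.biset φ = M.biset ψ)
    (χ : CForm) (w : M.W) (b : Bool) :
    M.sat (.cond φ χ) b w ↔ M.sat (.cond ψ χ) b w := by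
  cases b
  · change (∃ u, M.R w (M.biset φ) u ∧ _) ↔ ∃ u, M.R w (M.biset ψ) u ∧ _
    rw [h]
  · change (∀ v u, M.le w v → M.R v (M.biset φ) u → _) ↔
      ∀ v u, M.le w v → M.R v (M.biset ψ) u → _
    rw [h]

end CNModel

open CNModel

theorem cValid_strEquiv_iff (φ ψ : CForm) :
    CValid (strEquiv φ ψ) ↔ ∀ (M : CNModel) w b, M.sat φ b w ↔ M.sat ψ b w := by
  simp only [CValid, sat_strEquiv_iff]
  exact ⟨fun h M w => h M w w (M.refl w), fun h M _ v _ => h M v⟩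

theorem biset_eq_of_cValid_strEquiv {φ ψ : CForm} (h : CValid (strEquiv φ ψ)) (M : CNModel) :
    M.biset φ = M.biset ψ := by
  rw [cValid_strEquiv_iff] at h
  simp only [biset, h]

theorem ra_box_valid (φ ψ χ : CForm) (h : CValid (strEquiv φ ψ)) :
    (∀ M : CNModel,
        (({x | M.sat φ true x}, {x | M.sat φ false x}) : Set M.W × Set M.W) =
        ({x | M.sat ψ true x}, {x | M.sat ψ false x})) ∧
    CValid (strEquiv (.cond φ χ) (.cond ψ χ)) :=
  ⟨biset_eq_of_cValid_strEquiv h, (cValid_strEquiv_iff _ _).2 fun M =>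
    sat_cond_congr_left M (biset_eq_of_cValid_strEquiv h M) χ⟩
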